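/- For the Finsler space on ℝ⁴ with F = (x2² y1⁴ + y2⁴ + y3⁴ + y4⁴)^{1/4} (x2 > 0, y2 ≠ 0, y4 ≠ 0), the supporting element ℓ = y^i h_i does not lie in the nullity space N_R of the Cartan h-curvature at points where y1 ≠ 0 or y2 ≠ 0, i.e. W^i = y^i does not satisfy W^j R^i_{hjk} = 0 there. -/
import Mathlib


open scoped BigOperators

/-- The open set `U`: `x2 > 0`, `y2 ≠ 0`, `y4 ≠ 0`. -/
def U (x y : Fin 4 → ℝ) : Prop := 0 < x 1 ∧ y 1 ≠ 0 ∧ y 3 ≠ 0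

/-- The components `R^u_{i 12}` of the h-curvature of the Cartan connection of
`F = (x2² y1⁴ + y2⁴ + y3⁴ + y4⁴)^{1/4}` (with lower indices `j k = 1 2`). -/
noncomputable def Ccomp (x y : Fin 4 → ℝ) (u i : Fin 4) : ℝ :=
  let x2 := x 1; let y1 := y 0; let y2 := y 1; let y3 := y 2; let y4 := y 3
  let D := x2 ^ 2 * y1 ^ 4 + y2 ^ 4 + y3 ^ 4 + y4 ^ 4
  if u = 0 ∧ i = 1 then
    -(1 / 18) * (3 * x2 ^ 4 * y1 ^ 8 + 2 * x2 ^ 2 * y1 ^ 4 * y4 ^ 4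
      + 2 * y3 ^ 4 * x2 ^ 2 * y1 ^ 4 + 13 * x2 ^ 2 * y1 ^ 4 * y2 ^ 4 + 4 * y2 ^ 8
      + 8 * y3 ^ 4 * y2 ^ 4 + 8 * y2 ^ 4 * y4 ^ 4) / (x2 ^ 2 * D * y2 ^ 4)
  else if u = 1 ∧ i = 0 then
    (1 / 18) * (x2 ^ 4 * y1 ^ 8 + 2 * y3 ^ 4 * x2 ^ 2 * y1 ^ 4 + 2 * x2 ^ 2 * y1 ^ 4 * y4 ^ 4
      + 7 * x2 ^ 2 * y1 ^ 4 * y2 ^ 4 + 8 * y2 ^ 4 * y4 ^ 4 + 8 * y3 ^ 4 * y2 ^ 4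
      + 12 * y2 ^ 8) * y1 ^ 2 / (y2 ^ 6 * D)
  else if u = 0 ∧ i = 0 then
    (1 / 9) * y1 ^ 3 * (4 * y2 ^ 4 + x2 ^ 2 * y1 ^ 4) / (D * y2 ^ 3)
  else if u = 0 ∧ i = 2 then
    (1 / 18) * (4 * y2 ^ 4 + x2 ^ 2 * y1 ^ 4) * y3 ^ 3 / (x2 ^ 2 * y2 ^ 3 * D)
  else if u = 0 ∧ i = 3 then
    (1 / 18) * (4 * y2 ^ 4 + x2 ^ 2 * y1 ^ 4) * y4 ^ 3 / (x2 ^ 2 * y2 ^ 3 * D)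
  else if u = 1 ∧ i = 1 then
    -(1 / 9) * y1 ^ 3 * (4 * y2 ^ 4 + x2 ^ 2 * y1 ^ 4) / (D * y2 ^ 3)
  else if u = 1 ∧ i = 2 then
    -(1 / 18) * y1 ^ 3 * y3 ^ 3 * (4 * y2 ^ 4 + x2 ^ 2 * y1 ^ 4) / (y2 ^ 6 * D)
  else if u = 1 ∧ i = 3 then
    -(1 / 18) * y1 ^ 3 * y4 ^ 3 * (4 * y2 ^ 4 + x2 ^ 2 * y1 ^ 4) / (y2 ^ 6 * D)
  else if u = 2 ∧ i = 0 then
    (1 / 18) * (4 * y2 ^ 4 + x2 ^ 2 * y1 ^ 4) * y1 ^ 2 * y3 / (D * y2 ^ 3)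
  else if u = 2 ∧ i = 1 then
    -(1 / 18) * (4 * y2 ^ 4 + x2 ^ 2 * y1 ^ 4) * y3 * y1 ^ 3 / (D * y2 ^ 4)
  else if u = 3 ∧ i = 0 then
    (1 / 18) * (4 * y2 ^ 4 + x2 ^ 2 * y1 ^ 4) * y4 * y1 ^ 2 / (D * y2 ^ 3)
  else if u = 3 ∧ i = 1 then
    -(1 / 18) * (4 * y2 ^ 4 + x2 ^ 2 * y1 ^ 4) * y4 * y1 ^ 3 / (D * y2 ^ 4)
  else 0

/-- The h-curvature `R^u_{ijk}` of the Cartan connection of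
`F = (x2² y1⁴ + y2⁴ + y3⁴ + y4⁴)^{1/4}`: its only nonzero components are those with
`{j,k} = {1,2}` (antisymmetric in `j,k`), listed in `Ccomp`. -/
noncomputable def RC (x y : Fin 4 → ℝ) (u i j k : Fin 4) : ℝ :=
  if j = 0 ∧ k = 1 then Ccomp x y u i
  else if j = 1 ∧ k = 0 then -Ccomp x y u i
  else 0

/-- the supporting element `ℓ = y^i h_i` does not belong to the nullity space
`N_R` of the Cartan h-curvature of `F = (x2² y1⁴ + y2⁴ + y3⁴ + y4⁴)^{1/4}` at points of `U`
where `y1 ≠ 0` or `y2 ≠ 0`: substituting `W^i = y^i` into `W^j R^u_{ijk} = 0` fails. -/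
theorem statement19 :
    ∀ x y : Fin 4 → ℝ, U x y → (y 0 ≠ 0 ∨ y 1 ≠ 0) →
      ¬ (∀ u i k : Fin 4, (∑ j, y j * RC x y u i j k) = 0) := by
  rintro x y ⟨hx, hy2, hy4⟩ _ h
  have h0 := h 0 3 0
  rw [Fin.sum_univ_four] at h0
  simp only [RC, Ccomp, Fin.reduceEq] at h0
  norm_num at h0
  have hx' : x 1 ≠ 0 := ne_of_gt hx
  have hD : x 1 ^ 2 * y 0 ^ 4 + y 1 ^ 4 + y 2 ^ 4 + y 3 ^ 4 ≠ 0 := by positivity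
  have hN : 4 * y 1 ^ 4 + x 1 ^ 2 * y 0 ^ 4 ≠ 0 := by positivity
  rcases h0 with h0 | (h0 | h0) | (h0 | h0) | h0
  · exact hy2 h0
  · exact hN h0
  · exact hy4 h0
  · exact hx' h0
  · exact hy2 h0
  · exact hD h0
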